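/- Let X be the 2n×2n matrix in block form X = [[J_n, E_{nn}],[0, -J_nᵗ]] where J_n is the n×n nilpotent Jordan block and E_{nn} is the n×n matrix with 1 in position (n,n) and 0 elsewhere, and let u = (u_1,…,u_{2n})ᵗ ∈ 𝔽^{2n} with u_{n+1} ≠ 0. Then {u, Xu, X²u, …, X^{2n-1}u} is a basis of 𝔽^{2n}. -/

import Mathlib

open Matrix

/-- The `n×n` nilpotent Jordan block, with `1`'s on the superdiagonal. -/
def Jmat (𝔽 : Type*) [Field 𝔽] (n : ℕ) : Matrix (Fin n) (Fin n) 𝔽 :=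
  Matrix.of fun i j => if (i : ℕ) + 1 = (j : ℕ) then 1 else 0

section Aux

variable {𝔽 : Type*} [Field 𝔽] {n : ℕ}

/-- Extension of a `Fin n`-indexed vector to `ℕ` by zero. -/
def ext0 (w : Fin n → 𝔽) (m : ℕ) : 𝔽 := if h : m < n then w ⟨m, h⟩ else 0

lemma ext0_of_lt (w : Fin n → 𝔽) {m : ℕ} (h : m < n) : ext0 w m = w ⟨m, h⟩ := dif_pos h

lemma ext0_of_ge (w : Fin n → 𝔽) {m : ℕ} (h : n ≤ m) : ext0 w m = 0 := dif_neg (by omega)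

/-- The closed formula for `X^k *ᵥ u`. -/
def Fvec (u : Fin n ⊕ Fin n → 𝔽) (k : ℕ) : Fin n ⊕ Fin n → 𝔽
  | Sum.inl i => ext0 (fun j => u (Sum.inl j)) ((i : ℕ) + k) +
      (if (i : ℕ) + k < 2 * n then
        (-1 : 𝔽) ^ ((i : ℕ) + k - n) * ext0 (fun j => u (Sum.inr j)) (2 * n - 1 - k - (i : ℕ))
      else 0)
  | Sum.inr i => if k ≤ (i : ℕ) then
      (-1 : 𝔽) ^ k * ext0 (fun j => u (Sum.inr j)) ((i : ℕ) - k) else 0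

lemma Fvec_inl (u : Fin n ⊕ Fin n → 𝔽) (k : ℕ) (i : Fin n) :
    Fvec u k (Sum.inl i) = ext0 (fun j => u (Sum.inl j)) ((i : ℕ) + k) +
      (if (i : ℕ) + k < 2 * n then
        (-1 : 𝔽) ^ ((i : ℕ) + k - n) * ext0 (fun j => u (Sum.inr j)) (2 * n - 1 - k - (i : ℕ))
      else 0) := rfl

lemma Fvec_inr (u : Fin n ⊕ Fin n → 𝔽) (k : ℕ) (i : Fin n) :
    Fvec u k (Sum.inr i) = (if k ≤ (i : ℕ) then
      (-1 : 𝔽) ^ k * ext0 (fun j => u (Sum.inr j)) ((i : ℕ) - k) else 0) := rfl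

/-- Sum of a `Fin`-indexed function supported at (at most) one natural index. -/
lemma sum_fin_eq_nat (f : Fin n → 𝔽) (m : ℕ) :
    (∑ l : Fin n, if (l : ℕ) = m then f l else 0) =
      if h : m < n then f ⟨m, h⟩ else 0 := by
  by_cases h : m < n
  · rw [dif_pos h]
    rw [Fintype.sum_eq_single (⟨m, h⟩ : Fin n)]
    · simp
    · intro l hl
      rw [if_neg]
      intro hc
      exact hl (Fin.ext hc)
  · rw [dif_neg h]
    apply Finset.sum_eq_zero
    intro l _
    rw [if_neg]
    intro hc
    exact h (hc ▸ l.isLt)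

theorem main_aux (hn : 0 < n) (X : Matrix (Fin n ⊕ Fin n) (Fin n ⊕ Fin n) 𝔽)
    (hXll : ∀ i l : Fin n, X (Sum.inl i) (Sum.inl l) = if (i : ℕ) + 1 = (l : ℕ) then 1 else 0)
    (hXlr : ∀ i l : Fin n,
      X (Sum.inl i) (Sum.inr l) = if (i : ℕ) = n - 1 ∧ (l : ℕ) = n - 1 then 1 else 0)
    (hXrl : ∀ i l : Fin n, X (Sum.inr i) (Sum.inl l) = 0)
    (hXrr : ∀ i l : Fin n,
      X (Sum.inr i) (Sum.inr l) = if (l : ℕ) + 1 = (i : ℕ) then -1 else 0)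
    (u : Fin n ⊕ Fin n → 𝔽) (hu : u (Sum.inr ⟨0, hn⟩) ≠ 0) :
    LinearIndependent 𝔽 (fun i : Fin (2 * n) => (X ^ (i : ℕ)) *ᵥ u) ∧
      Submodule.span 𝔽 (Set.range fun i : Fin (2 * n) => (X ^ (i : ℕ)) *ᵥ u) = ⊤ := by
  classical
  -- multiplication formulas
  have hmul_inl : ∀ (w : Fin n ⊕ Fin n → 𝔽) (i : Fin n),
      (X *ᵥ w) (Sum.inl i) =
        (if h : (i : ℕ) + 1 < n then w (Sum.inl ⟨(i : ℕ) + 1, h⟩) else 0) +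
        (if (i : ℕ) = n - 1 then w (Sum.inr ⟨n - 1, by omega⟩) else 0) := by
    intro w i
    rw [mulVec, dotProduct, Fintype.sum_sum_type]
    have e1 : (∑ l : Fin n, X (Sum.inl i) (Sum.inl l) * w (Sum.inl l)) =
        (if h : (i : ℕ) + 1 < n then w (Sum.inl ⟨(i : ℕ) + 1, h⟩) else 0) := by
      rw [← sum_fin_eq_nat (fun l => w (Sum.inl l)) ((i : ℕ) + 1)]
      apply Finset.sum_congr rfl
      intro l _
      rw [hXll]
      by_cases h : (i : ℕ) + 1 = (l : ℕ)
      · rw [if_pos h, if_pos h.symm, one_mul]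
      · rw [if_neg h, if_neg (fun hc => h hc.symm), zero_mul]
    have e2 : (∑ l : Fin n, X (Sum.inl i) (Sum.inr l) * w (Sum.inr l)) =
        (if (i : ℕ) = n - 1 then w (Sum.inr ⟨n - 1, by omega⟩) else 0) := by
      by_cases hi : (i : ℕ) = n - 1
      · rw [if_pos hi]
        have : ∀ l : Fin n, X (Sum.inl i) (Sum.inr l) * w (Sum.inr l)
            = if (l : ℕ) = n - 1 then w (Sum.inr l) else 0 := by
          intro l
          rw [hXlr]
          by_cases h : (l : ℕ) = n - 1
          · rw [if_pos ⟨hi, h⟩, if_pos h, one_mul]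
          · rw [if_neg (fun hc => h hc.2), if_neg h, zero_mul]
        rw [Finset.sum_congr rfl (fun l _ => this l),
          sum_fin_eq_nat (fun l => w (Sum.inr l)) (n - 1), dif_pos (by omega)]
      · rw [if_neg hi]
        apply Finset.sum_eq_zero
        intro l _
        rw [hXlr, if_neg (fun hc => hi hc.1), zero_mul]
    rw [e1, e2]
  have hmul_inr : ∀ (w : Fin n ⊕ Fin n → 𝔽) (i : Fin n),
      (X *ᵥ w) (Sum.inr i) =
        (if (i : ℕ) = 0 then 0 else -w (Sum.inr ⟨(i : ℕ) - 1, by omega⟩)) := by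
    intro w i
    rw [mulVec, dotProduct, Fintype.sum_sum_type]
    have e1 : (∑ l : Fin n, X (Sum.inr i) (Sum.inl l) * w (Sum.inl l)) = 0 := by
      apply Finset.sum_eq_zero; intro l _; rw [hXrl, zero_mul]
    have e2 : ∀ l : Fin n, X (Sum.inr i) (Sum.inr l) * w (Sum.inr l)
        = if (l : ℕ) = (i : ℕ) - 1 then (if (i:ℕ) = 0 then 0 else -w (Sum.inr l)) else 0 := by
      intro l
      rw [hXrr]
      by_cases h : (l : ℕ) + 1 = (i : ℕ)
      · rw [if_pos h, if_pos (by omega), if_neg (by omega), neg_one_mul]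
      · rw [if_neg h]
        by_cases h2 : (l : ℕ) = (i : ℕ) - 1
        · rw [if_pos h2, if_pos (by omega), zero_mul]
        · rw [if_neg h2, zero_mul]
    rw [e1, Finset.sum_congr rfl (fun l _ => e2 l),
      sum_fin_eq_nat (fun l => if (i:ℕ) = 0 then 0 else -w (Sum.inr l)) ((i:ℕ) - 1),
      dif_pos (by omega), zero_add]
  -- the vectors satisfy the closed formula
  have hvF : ∀ k : ℕ, (X ^ k) *ᵥ u = Fvec u k := by
    intro k
    induction k with
    | zero =>
      rw [pow_zero, one_mulVec]
      funext c
      rcases c with i | i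
      · rw [Fvec_inl, if_pos (by omega : (i:ℕ) + 0 < 2 * n),
          ext0_of_ge _ (by omega : n ≤ 2 * n - 1 - 0 - (i:ℕ)), mul_zero, add_zero,
          ext0_of_lt _ (by omega : (i:ℕ) + 0 < n)]
        rfl
      · rw [Fvec_inr, if_pos (Nat.zero_le _), pow_zero, one_mul,
          ext0_of_lt _ (by omega : (i:ℕ) - 0 < n)]
        rfl
    | succ k ih =>
      rw [pow_succ', ← mulVec_mulVec, ih]
      funext c
      rcases c with i | i
      · rw [hmul_inl, Fvec_inl]
        by_cases h : (i : ℕ) + 1 < n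
        · rw [dif_pos h, if_neg (by omega : ¬ (i : ℕ) = n - 1), add_zero, Fvec_inl]
          have e1 : (i : ℕ) + 1 + k = (i : ℕ) + (k + 1) := by omega
          have e2 : 2 * n - 1 - k - ((i:ℕ) + 1) = 2 * n - 1 - (k + 1) - (i:ℕ) := by omega
          rw [e1, e2]
        · have hi : (i : ℕ) = n - 1 := by omega
          rw [dif_neg h, if_pos hi, zero_add, Fvec_inr,
            ext0_of_ge _ (by omega : n ≤ (i:ℕ) + (k + 1)), zero_add]
          by_cases hk : k ≤ n - 1
          · rw [if_pos hk, if_pos (by omega : (i:ℕ) + (k+1) < 2*n)]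
            have e1 : (i:ℕ) + (k + 1) - n = k := by omega
            have e2 : 2 * n - 1 - (k + 1) - (i:ℕ) = n - 1 - k := by omega
            rw [e1, e2]
          · rw [if_neg hk, if_neg (by omega : ¬ (i:ℕ) + (k+1) < 2*n)]
      · rw [hmul_inr, Fvec_inr]
        by_cases h0 : (i : ℕ) = 0
        · rw [if_pos h0, Fvec_inr, if_neg (show ¬ k + 1 ≤ (i:ℕ) by omega)]
        · rw [if_neg h0, Fvec_inr]
          by_cases hk : k + 1 ≤ (i : ℕ)
          · rw [if_pos (by omega : k ≤ ((i:ℕ) - 1 : ℕ)), if_pos hk]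
            have e1 : ((i:ℕ) - 1 : ℕ) - k = (i:ℕ) - (k + 1) := by omega
            rw [e1, pow_succ]
            ring
          · rw [if_neg (by omega : ¬ k ≤ ((i:ℕ) - 1 : ℕ)), if_neg hk, neg_zero]
  -- vanishing for k ≥ 2n
  have hzero : ∀ k : ℕ, 2 * n ≤ k → (X ^ k) *ᵥ u = 0 := by
    intro k hk
    rw [hvF]
    funext c
    rcases c with i | i
    · rw [Fvec_inl, ext0_of_ge _ (by omega), if_neg (by omega), add_zero]
      rfl
    · rw [Fvec_inr, if_neg (by omega)]
      rfl
  -- the top vector is nonzero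
  have htop : (X ^ (2 * n - 1)) *ᵥ u ≠ 0 := by
    rw [hvF]
    intro hc
    have h0 : Fvec u (2 * n - 1) (Sum.inl ⟨0, hn⟩) = 0 := by rw [hc]; rfl
    rw [Fvec_inl] at h0
    simp only [Fin.val_mk] at h0
    rw [if_pos (show 0 + (2 * n - 1) < 2 * n by omega), ext0_of_ge _ (by omega : n ≤ 0 + (2 * n - 1)), zero_add,
      ext0_of_lt _ (by omega : 2 * n - 1 - (2 * n - 1) - 0 < n), mul_eq_zero] at h0
    rcases h0 with h | h
    · exact pow_ne_zero _ (by norm_num : (-1 : 𝔽) ≠ 0) h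
    · apply hu
      rw [← h]
      exact congrArg u (congrArg Sum.inr (Fin.ext (by simp)))
  -- linear independence
  have hli : LinearIndependent 𝔽 (fun i : Fin (2 * n) => (X ^ (i : ℕ)) *ᵥ u) := by
    rw [Fintype.linearIndependent_iff]
    intro g hg j
    have key : ∀ k : ℕ, ∀ j : Fin (2 * n), (j : ℕ) = k → g j = 0 := by
      intro k
      induction k using Nat.strong_induction_on with
      | _ k ih =>
        intro j hj
        have hgm := congrArg (fun w => (X ^ (2 * n - 1 - k)) *ᵥ w) hg
        simp only [mulVec_zero] at hgm
        simp only [← mulVecLin_apply, map_sum, _root_.map_smul] at hgm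
        simp only [mulVecLin_apply, mulVec_mulVec, ← pow_add] at hgm
        rw [Finset.sum_eq_single j] at hgm
        · have e : 2 * n - 1 - k + (j : ℕ) = 2 * n - 1 := by omega
          rw [e] at hgm
          rcases smul_eq_zero.mp hgm with h | h
          · exact h
          · exact absurd h htop
        · intro i _ hij
          rcases lt_or_gt_of_ne (fun hc : (i : ℕ) = (j : ℕ) => hij (Fin.ext hc)) with h | h
          · rw [ih (i : ℕ) (by omega) i rfl, zero_smul]
          · rw [hzero _ (by omega), smul_zero]
        · intro h
          exact absurd (Finset.mem_univ j) h
    exact key (j : ℕ) j rfl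
  refine ⟨hli, ?_⟩
  apply hli.span_eq_top_of_card_eq_finrank'
  rw [Module.finrank_pi]
  simp only [Fintype.card_fin, Fintype.card_sum]
  omega

end Aux

/-- for `X = [[Jₙ, Eₙₙ],[0, -Jₙᵗ]]` and `u` with `u_{n+1} ≠ 0`,
the vectors `u, Xu, …, X^{2n-1}u` form a basis of `𝔽^{2n}`
(here `𝔽^{2n}` is modeled as `Fin n ⊕ Fin n → 𝔽`, and `u_{n+1}` is `u (Sum.inr 0)`). -/
theorem stmt2 {𝔽 : Type*} [Field 𝔽] [IsAlgClosed 𝔽] [CharZero 𝔽]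
    {n : ℕ} (hn : 0 < n) (u : Fin n ⊕ Fin n → 𝔽) (hu : u (Sum.inr ⟨0, hn⟩) ≠ 0) :
    letI X : Matrix (Fin n ⊕ Fin n) (Fin n ⊕ Fin n) 𝔽 :=
      Matrix.fromBlocks (Jmat 𝔽 n)
        (Matrix.single ⟨n - 1, by omega⟩ ⟨n - 1, by omega⟩ (1 : 𝔽))
        0 (-(Jmat 𝔽 n)ᵀ)
    LinearIndependent 𝔽 (fun i : Fin (2 * n) => (X ^ (i : ℕ)) *ᵥ u) ∧
      Submodule.span 𝔽 (Set.range fun i : Fin (2 * n) => (X ^ (i : ℕ)) *ᵥ u) = ⊤ := by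
  apply main_aux hn
  · intro i l
    simp [Jmat]
  · intro i l
    simp only [fromBlocks_apply₁₂, Matrix.single, of_apply]
    by_cases h : (i : ℕ) = n - 1 ∧ (l : ℕ) = n - 1
    · rw [if_pos h, if_pos ⟨Fin.ext h.1.symm, Fin.ext h.2.symm⟩]
    · rw [if_neg h, if_neg]
      rintro ⟨h1, h2⟩
      exact h ⟨congrArg Fin.val h1.symm, congrArg Fin.val h2.symm⟩
  · intro i l
    simp
  · intro i l
    simp only [fromBlocks_apply₂₂, Matrix.neg_apply, transpose_apply, Jmat, of_apply]
    split_ifs <;> simp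
  · exact hu
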